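/- arXiv:2109.03314 — 2 statements merged into one kernel-verified Lean document; each statement's English description precedes it below -/
import Mathlib

section
/- If f is relatively L-smooth, i.e., f(y) ≤ f(x) + ⟨∇f(x), y - x⟩ + L V(y,x) for all x, y ∈ Q, then the operator g = ∇f satisfies the relative smoothness condition for operators: ⟨g(y) - g(z), x - z⟩ ≤ L V(x,z) + L V(z,y) for all x, y, z ∈ Q. -/
open RealInnerProductSpace

/-- If `f` is relatively L-smooth, then `g = ∇f` satisfies the relative
smoothness condition for operators:
`⟪g y - g z, x - z⟫ ≤ L V(x,z) + L V(z,y)` for all `x, y, z ∈ Q`. -/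
theorem stmt3 {n : ℕ} (Q : Set (EuclideanSpace ℝ (Fin n)))
    (d f : EuclideanSpace ℝ (Fin n) → ℝ)
    (gd gradf : EuclideanSpace ℝ (Fin n) → EuclideanSpace ℝ (Fin n))
    (V : EuclideanSpace ℝ (Fin n) → EuclideanSpace ℝ (Fin n) → ℝ)
    (hV : ∀ y x, V y x = d y - d x - ⟪gd x, y - x⟫) (L : ℝ) (hL : 0 < L)
    (hfconv : ∀ x ∈ Q, ∀ y ∈ Q, f x + ⟪gradf x, y - x⟫ ≤ f y)
    (hsmooth : ∀ x ∈ Q, ∀ y ∈ Q, f y ≤ f x + ⟪gradf x, y - x⟫ + L * V y x) :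
    ∀ x ∈ Q, ∀ y ∈ Q, ∀ z ∈ Q,
      ⟪gradf y - gradf z, x - z⟫ ≤ L * V x z + L * V z y := by
  intro x hx y hy z hz
  have h1 := hfconv y hy x hx
  have h2 := hsmooth y hy z hz
  have h3 := hsmooth z hz x hx
  simp only [inner_sub_left, inner_sub_right] at *
  linarith
end

section
/- In the adaptive proximal mirror method, if the adaptive smoothness condition ⟨g(z_k) - g(w_k), z_{k+1} - w_k⟩ ≤ L_{k+1}(V(w_k, z_k) + V(z_{k+1}, w_k)) holds, then combining the optimality inequalities of both argmin steps yields, for every u ∈ Q: -⟨g(w_k), u - w_k⟩ ≤ L_{k+1}V(u, z_k) - L_{k+1}V(u, z_{k+1}). -/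
open RealInnerProductSpace

/-- Combining the two optimality inequalities of the adaptive proximal mirror
method with the adaptive smoothness condition yields, for every `u ∈ Q`:
`-⟪g w, u - w⟫ ≤ L V(u, z) - L V(u, z')`. -/
theorem stmt9 {n : ℕ} (Q : Set (EuclideanSpace ℝ (Fin n)))
    (g : EuclideanSpace ℝ (Fin n) → EuclideanSpace ℝ (Fin n))
    (V : EuclideanSpace ℝ (Fin n) → EuclideanSpace ℝ (Fin n) → ℝ)
    (hVnonneg : ∀ x y, 0 ≤ V y x)
    (L : ℝ) (hL : 0 < L)
    (z w z' : EuclideanSpace ℝ (Fin n)) (hz : z ∈ Q) (hw : w ∈ Q) (hz' : z' ∈ Q)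
    -- optimality inequality of the first argmin step
    (hopt1 : ∀ u ∈ Q, ⟪g z, w - z⟫ ≤
      ⟪g z, u - z⟫ + L * (V u z - V u w - V w z))
    -- optimality inequality of the second argmin step
    (hopt2 : ∀ u ∈ Q, ⟪g w, z' - w⟫ ≤
      ⟪g w, u - w⟫ + L * (V u z - V u z' - V z' z))
    -- adaptive smoothness condition
    (hsmooth : ⟪g z - g w, z' - w⟫ ≤ L * (V w z + V z' w)) :
    ∀ u ∈ Q, -⟪g w, u - w⟫ ≤ L * V u z - L * V u z' := by
  intro u hu
  have A := hopt1 z' hz'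
  have B := hopt2 u hu
  simp only [inner_sub_left, inner_sub_right] at A B hsmooth ⊢
  nlinarith [hVnonneg z w, hVnonneg w z', hVnonneg z z']
end
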